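/- Let α < γ ≤ β be cones of Δ (α a proper face of γ and γ a face of β). Then there exist cones γ_p ∈ Δ, each containing α as a proper face and none contained in β, and elements b, b_p ∈ S, such that x(γ) = Σ_p b_p·x(γ_p) + b·x(α) in ℛ. -/

import Mathlib

open scoped Classical

noncomputable section

namespace SU

/-- The closed real cone spanned by the vectors `v j`, `j ∈ F`. -/
def realCone {n d : ℕ} (v : Fin d → Fin n → ℤ) (F : Finset (Fin d)) : Set (Fin n → ℝ) :=
  {x | ∃ c : Fin d → ℝ, (∀ j, 0 ≤ c j) ∧ (∀ j, j ∉ F → c j = 0) ∧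
    x = ∑ j, c j • fun i => (v j i : ℝ)}

/-- A complete nonsingular fan in `N = ℤ^n`, recorded combinatorially.  Since the
cones of a nonsingular fan are simplicial, every cone is determined by the set of
its edges; `isCone F` says that the primitive vectors `v j`, `j ∈ F`, span a cone
of the fan `Δ`.  Faces correspond to subsets, and the dimension of a cone is the
cardinality of its edge set. -/
structure Fan (n d : ℕ) where
  /-- the primitive generators of the `d` edges (1-dimensional cones) of the fan -/
  v : Fin d → Fin n → ℤ
  v_inj : Function.Injective v
  /-- `isCone F` : the `v j`, `j ∈ F`, span a cone of the fan -/
  isCone : Finset (Fin d) → Prop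
  isCone_empty : isCone ∅
  isCone_singleton : ∀ j, isCone {j}
  /-- the fan is closed under taking faces -/
  isCone_mono : ∀ {F G}, isCone F → G ⊆ F → isCone G
  /-- any two cones meet along a common face -/
  isCone_inter : ∀ {F G}, isCone F → isCone G → isCone (F ∩ G)
  realCone_inter : ∀ {F G}, isCone F → isCone G →
    realCone v F ∩ realCone v G = realCone v (F ∩ G)
  /-- the fan is complete : the union of its cones is all of `N ⊗ ℝ` -/
  complete : ∀ x : Fin n → ℝ, ∃ F, isCone F ∧ x ∈ realCone v F
  /-- nonsingularity : the generators of each cone form part of a `ℤ`-basis of `N` -/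
  unimodular : ∀ {F}, isCone F → ∃ (b : Module.Basis (Fin n) ℤ (Fin n → ℤ))
    (ι : Fin d → Fin n), Set.InjOn ι ↑F ∧ ∀ j ∈ F, b (ι j) = v j

/-- An enumeration `σ 0, …, σ (m-1)` of the `n`-dimensional cones of the fan. -/
structure MaxOrder {n d : ℕ} (Δ : Fan n d) (m : ℕ) where
  σ : Fin m → Finset (Fin d)
  isCone_σ : ∀ i, Δ.isCone (σ i)
  card_σ : ∀ i, (σ i).card = n
  σ_inj : Function.Injective σ
  σ_surj : ∀ F, Δ.isCone F → F.card = n → ∃ i, σ i = F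

/-- `τ i` : the intersection of `σ i` with those cones `σ k`, `k > i`, with
`dim (σ i ∩ σ k) = n - 1`. -/
def MaxOrder.tau {n d m : ℕ} {Δ : Fan n d} (o : MaxOrder Δ m) (i : Fin m) :
    Finset (Fin d) :=
  (o.σ i).filter fun j => ∀ k, i < k → ((o.σ i) ∩ (o.σ k)).card = n - 1 → j ∈ o.σ k

/-- Property (*) : `τ i` a face of `σ j` implies `i ≤ j`. -/
def MaxOrder.Star {n d m : ℕ} {Δ : Fan n d} (o : MaxOrder Δ m) : Prop :=
  ∀ i j, o.tau i ⊆ o.σ j → i ≤ j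

/-- the set `{1, …, n} ⊆ {1, …, d}` of the first `n` edges -/
def firstn {n d : ℕ} (hnd : n ≤ d) : Finset (Fin d) :=
  Finset.univ.map ⟨Fin.castLE hnd, Fin.castLE_injective hnd⟩

variable {n d : ℕ} (S : Type*) [Ring S]

/-- The polynomial algebra over a (possibly noncommutative) ring `S` in `d`
central, pairwise commuting, variables. -/
abbrev Poly (S : Type*) [Ring S] (d : ℕ) : Type _ := AddMonoidAlgebra S (Fin d →₀ ℕ)

/-- the variable `x j` -/
def X (j : Fin d) : Poly S d := AddMonoidAlgebra.single (Finsupp.single j 1) 1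

/-- the scalar `s ∈ S` as a polynomial -/
def Cc (s : S) : Poly S d := AddMonoidAlgebra.single 0 s

/-- The square-free monomial `∏_{j ∈ F} x j`. -/
def mon (F : Finset (Fin d)) : Poly S d :=
  AddMonoidAlgebra.single (∑ j ∈ F, Finsupp.single j 1) 1

lemma commute_X (j k : Fin d) : Commute (X S j) (X S k) := by
  show X S j * X S k = X S k * X S j
  simp only [X]
  rw [AddMonoidAlgebra.single_mul_single, AddMonoidAlgebra.single_mul_single, add_comm]

lemma commute_one_sub_X_pow (j k : Fin d) (a b : ℕ) :
    Commute ((1 - X S j) ^ a) ((1 - X S k) ^ b) :=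
  ((Commute.one_left (1 - X S k)).sub_left
    ((Commute.one_right (X S j)).sub_right (commute_X S j k))).pow_pow a b

/-- the relation (on the polynomial ring) identifying every member of `gens`
with `0`; the corresponding `RingQuot` is the quotient by the two-sided ideal
generated by `gens`. -/
def relOf (gens : Set (Poly S d)) : Poly S d → Poly S d → Prop :=
  fun p q => p ∈ gens ∧ q = 0

/-- type (i) generators : the monomials `x_{j₁} ⋯ x_{j_k}` (distinct indices)
such that `v_{j₁}, …, v_{j_k}` do not span a cone of `Δ`. -/
def gensCone (Δ : Fan n d) : Set (Poly S d) :=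
  {p | ∃ F : Finset (Fin d), ¬ Δ.isCone F ∧ p = mon S F}

/-- type (ii) generators : the elements `y i = ∑_j ⟨u i, v j⟩ x j - r i`. -/
def gensLin (Δ : Fan n d) (uu : Fin n → ((Fin n → ℤ) →ₗ[ℤ] ℤ)) (r : Fin n → S) :
    Set (Poly S d) :=
  {p | ∃ i : Fin n, p = (∑ j, (uu i (Δ.v j)) • X S j) - Cc S (r i)}

/-- the generators of the ideal `I_S` -/
def gensI (Δ : Fan n d) (uu : Fin n → ((Fin n → ℤ) →ₗ[ℤ] ℤ)) (r : Fin n → S) :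
    Set (Poly S d) :=
  gensCone S Δ ∪ gensLin S Δ uu r

/-- the ring `R = S[x₁,…,x_d]/I_S` -/
abbrev RRing (Δ : Fan n d) (uu : Fin n → ((Fin n → ℤ) →ₗ[ℤ] ℤ)) (r : Fin n → S) :
    Type _ :=
  RingQuot (relOf S (gensI S Δ uu r))

/-- the quotient map `S[x₁,…,x_d] → R` -/
def mkR (Δ : Fan n d) (uu : Fin n → ((Fin n → ℤ) →ₗ[ℤ] ℤ)) (r : Fin n → S) :
    Poly S d →+* RRing S Δ uu r :=
  RingQuot.mkRingHom _

/-- `∏_{j : ⟨u, v j⟩ > 0} (1 - x j) ^ ⟨u, v j⟩` -/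
def zPos (Δ : Fan n d) (u : (Fin n → ℤ) →ₗ[ℤ] ℤ) : Poly S d :=
  Finset.univ.noncommProd (fun j => (1 - X S j) ^ (u (Δ.v j)).toNat)
    (fun j _ k _ _ => commute_one_sub_X_pow S j k _ _)

/-- `∏_{j : ⟨u, v j⟩ < 0} (1 - x j) ^ (-⟨u, v j⟩)` -/
def zNeg (Δ : Fan n d) (u : (Fin n → ℤ) →ₗ[ℤ] ℤ) : Poly S d :=
  Finset.univ.noncommProd (fun j => (1 - X S j) ^ (-(u (Δ.v j))).toNat)
    (fun j _ k _ _ => commute_one_sub_X_pow S j k _ _)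

lemma central_commute (ru : Fin n → Sˣ)
    (hcen : ∀ i, (ru i : S) ∈ Subring.center S) (i k : Fin n) :
    Commute (ru i) (ru k) := by
  show ru i * ru k = ru k * ru i
  exact Units.ext (by simpa using (Subring.mem_center_iff.mp (hcen i) (ru k)).symm)

/-- `r(u) = ∏_i r i ^ a i` for `u = ∑ a i • u i`, the `r i` being invertible. -/
def rOf (ru : Fin n → Sˣ) (hc : ∀ i k, Commute (ru i) (ru k)) (a : Fin n → ℤ) : S :=
  (Finset.univ.noncommProd (fun i => ru i ^ a i)
    (fun i _ k _ _ => (hc i k).zpow_zpow _ _) : Sˣ)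

/-- type (ii′) generators : the elements `z(u)` for `u ∈ M` -/
def gensZ (Δ : Fan n d) (uu : Fin n → ((Fin n → ℤ) →ₗ[ℤ] ℤ)) (ru : Fin n → Sˣ)
    (hc : ∀ i k, Commute (ru i) (ru k)) : Set (Poly S d) :=
  {p | ∃ a : Fin n → ℤ, p = zPos S Δ (∑ i, a i • uu i) -
    Cc S (rOf S ru hc a) * zNeg S Δ (∑ i, a i • uu i)}

/-- the generators of the ideal `𝓘_S` -/
def gensII (Δ : Fan n d) (uu : Fin n → ((Fin n → ℤ) →ₗ[ℤ] ℤ)) (ru : Fin n → Sˣ)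
    (hc : ∀ i k, Commute (ru i) (ru k)) : Set (Poly S d) :=
  gensCone S Δ ∪ gensZ S Δ uu ru hc

/-- the ring `ℛ = S[x₁,…,x_d]/𝓘_S` -/
abbrev RcalRing (Δ : Fan n d) (uu : Fin n → ((Fin n → ℤ) →ₗ[ℤ] ℤ)) (ru : Fin n → Sˣ)
    (hc : ∀ i k, Commute (ru i) (ru k)) : Type _ :=
  RingQuot (relOf S (gensII S Δ uu ru hc))

/-- the quotient map `S[x₁,…,x_d] → ℛ` -/
def mkRcal (Δ : Fan n d) (uu : Fin n → ((Fin n → ℤ) →ₗ[ℤ] ℤ)) (ru : Fin n → Sˣ)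
    (hc : ∀ i k, Commute (ru i) (ru k)) : Poly S d →+* RcalRing S Δ uu ru hc :=
  RingQuot.mkRingHom _

/-! ### Auxiliary machinery for the proof of `statement6` -/

section AuxPoly

variable {n d : ℕ} {S : Type*} [Ring S]

lemma Cc_one : Cc S (1 : S) = (1 : Poly S d) := AddMonoidAlgebra.one_def.symm

lemma Cc_mul (a b : S) : (Cc S a : Poly S d) * Cc S b = Cc S (a * b) := by
  unfold Cc
  rw [AddMonoidAlgebra.single_mul_single, add_zero]

lemma Cc_sub (a b : S) : (Cc S (a - b) : Poly S d) = Cc S a - Cc S b :=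
  AddMonoidAlgebra.single_sub _ _ _

lemma Cc_mul_single (a : S) (μ : Fin d →₀ ℕ) (b : S) :
    (Cc S a : Poly S d) * AddMonoidAlgebra.single μ b = AddMonoidAlgebra.single μ (a * b) := by
  unfold Cc
  rw [AddMonoidAlgebra.single_mul_single, zero_add]

/-- monomials with coefficient `1` are central in `Poly S d` -/
lemma single_one_comm (μ : Fin d →₀ ℕ) (p : Poly S d) :
    (AddMonoidAlgebra.single μ (1 : S) : Poly S d) * p = p * AddMonoidAlgebra.single μ 1 := by
  induction p using AddMonoidAlgebra.induction_linear with
  | zero => simp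
  | add p q hp hq => rw [mul_add, add_mul, hp, hq]
  | single κ b =>
    rw [AddMonoidAlgebra.single_mul_single, AddMonoidAlgebra.single_mul_single, one_mul,
      mul_one, add_comm]

lemma X_mul_single (j : Fin d) (κ : Fin d →₀ ℕ) (b : S) :
    X S j * AddMonoidAlgebra.single κ b = AddMonoidAlgebra.single (Finsupp.single j 1 + κ) b := by
  unfold X
  rw [AddMonoidAlgebra.single_mul_single, one_mul]

/-- the "constant coefficient" multiplicative map on monomials -/
def eps0Aux : Multiplicative (Fin d →₀ ℕ) →* S where
  toFun μ := if Multiplicative.toAdd μ = 0 then 1 else 0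
  map_one' := by simp
  map_mul' a b := by
    by_cases ha : Multiplicative.toAdd a = 0 <;> by_cases hb : Multiplicative.toAdd b = 0 <;>
      simp [toAdd_mul, Finsupp.add_eq_zero_iff, ha, hb]

/-- the "constant coefficient" ring homomorphism `Poly S d →+* S` -/
def eps0 (S : Type*) [Ring S] {d : ℕ} : Poly S d →+* S :=
  AddMonoidAlgebra.liftNCRingHom (RingHom.id S) eps0Aux (fun x y => by
    dsimp [eps0Aux]
    split_ifs
    · exact Commute.one_right _
    · exact Commute.zero_right _)

lemma eps0_single (μ : Fin d →₀ ℕ) (b : S) :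
    eps0 S (AddMonoidAlgebra.single μ b : Poly S d) = if μ = 0 then b else 0 := by
  show AddMonoidAlgebra.liftNC _ _ _ = _
  rw [AddMonoidAlgebra.liftNC_single]
  dsimp [eps0Aux]
  by_cases h : μ = 0 <;> simp [h]

lemma coeff_zero_eq_eps0 (p : Poly S d) : p.coeff 0 = eps0 S p := by
  induction p using AddMonoidAlgebra.induction_linear with
  | zero => simp
  | add f g hf hg =>
    rw [map_add]
    rw [← hf, ← hg]
    rfl
  | single μ b =>
    rw [eps0_single, AddMonoidAlgebra.coeff_single, Finsupp.single_apply]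

lemma eps0_one_sub_X (j : Fin d) : eps0 S (1 - X S j : Poly S d) = 1 := by
  rw [map_sub, map_one]
  unfold X
  rw [eps0_single, if_neg, sub_zero]
  exact fun h => one_ne_zero (Finsupp.single_eq_zero.mp h)

/-- all monomials occurring in `p` only involve variables from `B` -/
def SuppIn (B : Set (Fin d)) (p : Poly S d) : Prop :=
  ∀ μ ∈ p.coeff.support, ∀ j ∈ μ.support, j ∈ B

lemma suppIn_one (B : Set (Fin d)) : SuppIn B (1 : Poly S d) := by
  intro μ hμ j hj
  rw [AddMonoidAlgebra.one_def] at hμ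
  have h2 := Finsupp.support_single_subset hμ
  simp only [Finset.mem_singleton] at h2
  subst h2
  simp at hj

lemma suppIn_mul {B : Set (Fin d)} {p q : Poly S d} (hp : SuppIn B p) (hq : SuppIn B q) :
    SuppIn B (p * q) := by
  classical
  intro μ hμ j hj
  have h := AddMonoidAlgebra.support_coeff_mul_subset p q hμ
  rw [Finset.mem_add] at h
  obtain ⟨a, ha, b, hb, rfl⟩ := h
  have hj' := Finsupp.support_add hj
  rcases Finset.mem_union.mp hj' with h | h
  · exact hp a ha j h
  · exact hq b hb j h

lemma suppIn_pow {B : Set (Fin d)} {p : Poly S d} (hp : SuppIn B p) (m : ℕ) :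
    SuppIn B (p ^ m) := by
  induction m with
  | zero => rw [pow_zero]; exact suppIn_one B
  | succ m ih => rw [pow_succ]; exact suppIn_mul ih hp

lemma suppIn_one_sub_X {B : Set (Fin d)} {j : Fin d} (hj : j ∈ B) :
    SuppIn B (1 - X S j : Poly S d) := by
  classical
  intro μ hμ l hl
  rw [AddMonoidAlgebra.coeff_sub] at hμ
  have h := Finsupp.support_sub hμ
  rcases Finset.mem_union.mp h with h' | h'
  · rw [AddMonoidAlgebra.one_def] at h'
    have h2 := Finsupp.support_single_subset h'
    simp only [Finset.mem_singleton] at h2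
    subst h2
    simp at hl
  · have h2 := Finsupp.support_single_subset h'
    simp only [Finset.mem_singleton] at h2
    subst h2
    have h3 := Finsupp.support_single_subset hl
    simp only [Finset.mem_singleton] at h3
    subst h3
    exact hj

lemma suppIn_noncommProd (B : Set (Fin d)) (F : Finset (Fin d)) (f : Fin d → Poly S d)
    (comm) (h : ∀ j ∈ F, SuppIn B (f j)) : SuppIn B (F.noncommProd f comm) :=
  Finset.noncommProd_induction F f comm (SuppIn B) (fun _ _ => suppIn_mul) (suppIn_one B) h

lemma eps0_noncommProd (F : Finset (Fin d)) (f : Fin d → Poly S d) (comm)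
    (h : ∀ j ∈ F, eps0 S (f j) = 1) : eps0 S (F.noncommProd f comm) = 1 :=
  Finset.noncommProd_induction F f comm (fun x => eps0 S x = 1)
    (fun a b ha hb => by
      have ha' : eps0 S a = 1 := ha
      have hb' : eps0 S b = 1 := hb
      show eps0 S (a * b) = 1
      rw [map_mul, ha', hb', one_mul]) (map_one _) h

/-- facts about `p - 1` when `p` has constant term `1` and variables in `B` -/
lemma sub_one_facts {p : Poly S d} {B : Set (Fin d)} (h1 : eps0 S p = 1) (h2 : SuppIn B p) :
    ∀ μ ∈ (p - 1).coeff.support, μ ≠ 0 ∧ ∀ j ∈ μ.support, j ∈ B := by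
  classical
  intro μ hμ
  have hμ0 : μ ≠ 0 := by
    rintro rfl
    have hz : (p - 1 : Poly S d).coeff 0 = 0 := by
      rw [AddMonoidAlgebra.coeff_sub, Finsupp.sub_apply, coeff_zero_eq_eps0, h1]
      rw [AddMonoidAlgebra.one_def, AddMonoidAlgebra.coeff_single, Finsupp.single_eq_same, sub_self]
    exact Finsupp.mem_support_iff.mp hμ hz
  refine ⟨hμ0, fun j hj => ?_⟩
  rw [AddMonoidAlgebra.coeff_sub] at hμ
  have h3 := Finsupp.support_sub hμ
  rcases Finset.mem_union.mp h3 with h' | h'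
  · exact h2 μ h' j hj
  · rw [AddMonoidAlgebra.one_def] at h'
    have h4 := Finsupp.support_single_subset h'
    simp only [Finset.mem_singleton] at h4
    exact absurd h4 hμ0

lemma indicator_apply (F : Finset (Fin d)) (j : Fin d) :
    (∑ i ∈ F, Finsupp.single i (1 : ℕ)) j = if j ∈ F then 1 else 0 := by
  classical
  rw [Finsupp.finset_sum_apply]
  simp only [Finsupp.single_apply]
  exact Finset.sum_ite_eq' F j (fun _ => 1)

lemma indicator_support (F : Finset (Fin d)) :
    (∑ i ∈ F, Finsupp.single i (1 : ℕ)).support = F := by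
  classical
  ext j
  rw [Finsupp.mem_support_iff, indicator_apply]
  by_cases h : j ∈ F <;> simp [h]

lemma squarefree_eq (ν : Fin d →₀ ℕ) (h : ∀ j, ν j ≤ 1) :
    ν = ∑ j ∈ ν.support, Finsupp.single j 1 := by
  classical
  ext j
  rw [indicator_apply]
  by_cases hj : j ∈ ν.support
  · have h1 := Finsupp.mem_support_iff.mp hj
    have h2 := h j
    simp only [hj, if_true]
    omega
  · simp only [hj, if_false]
    exact Finsupp.notMem_support_iff.mp hj

lemma support_add_union (μ κ : Fin d →₀ ℕ) :
    (μ + κ).support = μ.support ∪ κ.support := by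
  classical
  ext j
  simp only [Finsupp.mem_support_iff, Finset.mem_union, Finsupp.add_apply]
  omega

/-- abstract rearrangement in a ring used for the reduction step -/
lemma key_identity {T : Type*} [Ring T] (x y p q R dd ee : T)
    (hrel : (1 - x) * p = R * q) (hp : p = 1 + dd) (hq : q = 1 + ee) :
    x * y = (1 - R) * y + (dd * y - R * (ee * y) - x * (dd * y)) := by
  have h2 : (1 - x) * (1 + dd) = R * (1 + ee) := by rw [← hp, ← hq]; exact hrel
  have h3 : (1 - x) * ((1 + dd) * y) = (R * (1 + ee)) * y := by rw [← mul_assoc, h2]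
  calc x * y = (1 + dd) * y - (1 - x) * ((1 + dd) * y) - x * (dd * y) := by noncomm_ring
    _ = (1 + dd) * y - (R * (1 + ee)) * y - x * (dd * y) := by rw [h3]
    _ = (1 - R) * y + (dd * y - R * (ee * y) - x * (dd * y)) := by noncomm_ring

end AuxPoly

section AuxFan

variable {n d : ℕ} {S : Type*} [Ring S]

/-- a dual functional for an edge of a cone -/
lemma exists_dual (Δ : Fan n d) {G : Finset (Fin d)} (hG : Δ.isCone G) {k : Fin d}
    (hk : k ∈ G) :
    ∃ u : (Fin n → ℤ) →ₗ[ℤ] ℤ, u (Δ.v k) = 1 ∧ ∀ j ∈ G, j ≠ k → u (Δ.v j) = 0 := by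
  obtain ⟨b, ι, hinj, hb⟩ := Δ.unimodular hG
  refine ⟨b.coord (ι k), ?_, ?_⟩
  · rw [← hb k hk, Module.Basis.coord_apply, Module.Basis.repr_self, Finsupp.single_eq_same]
  · intro j hj hne
    rw [← hb j hj, Module.Basis.coord_apply, Module.Basis.repr_self, Finsupp.single_apply, if_neg]
    intro h
    exact hne (hinj hj hk h)

/-- splitting off the distinguished factor of `zPos`, with support control -/
lemma zfacts (Δ : Fan n d) (u : (Fin n → ℤ) →ₗ[ℤ] ℤ) (B : Set (Fin d)) (k : Fin d)
    (hu1 : u (Δ.v k) = 1)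
    (hB : ∀ j : Fin d, j ≠ k → u (Δ.v j) ≠ 0 → j ∈ B) :
    ∃ P : Poly S d, zPos S Δ u = (1 - X S k) * P ∧
      (∀ μ ∈ (P - 1).coeff.support, μ ≠ 0 ∧ ∀ j ∈ μ.support, j ∈ B) ∧
      (∀ μ ∈ (zNeg S Δ u - 1).coeff.support, μ ≠ 0 ∧ ∀ j ∈ μ.support, j ∈ B) := by
  classical
  refine ⟨(Finset.univ.erase k).noncommProd (fun j => (1 - X S j) ^ (u (Δ.v j)).toNat)
      (fun j _ l _ _ => commute_one_sub_X_pow S j l _ _), ?_, ?_, ?_⟩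
  · have hsplit := (Finset.mul_noncommProd_erase Finset.univ (Finset.mem_univ k)
      (fun j => (1 - X S j) ^ (u (Δ.v j)).toNat)
      (fun j _ l _ _ => commute_one_sub_X_pow S j l _ _)).symm
    calc zPos S Δ u = (1 - X S k) ^ (u (Δ.v k)).toNat *
          (Finset.univ.erase k).noncommProd (fun j => (1 - X S j) ^ (u (Δ.v j)).toNat)
            (fun j _ l _ _ => commute_one_sub_X_pow S j l _ _) := hsplit
      _ = _ := by rw [hu1]; norm_num
  · apply sub_one_facts
    · exact eps0_noncommProd _ _ _ (fun j _ => by rw [map_pow, eps0_one_sub_X, one_pow])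
    · apply suppIn_noncommProd
      intro j hj
      by_cases h0 : (u (Δ.v j)).toNat = 0
      · rw [h0, pow_zero]
        exact suppIn_one B
      · have hne : u (Δ.v j) ≠ 0 := by omega
        exact suppIn_pow (suppIn_one_sub_X (hB j (Finset.ne_of_mem_erase hj) hne)) _
  · apply sub_one_facts
    · exact eps0_noncommProd _ _ _ (fun j _ => by rw [map_pow, eps0_one_sub_X, one_pow])
    · apply suppIn_noncommProd
      intro j _
      by_cases h0 : (-(u (Δ.v j))).toNat = 0
      · rw [h0, pow_zero]
        exact suppIn_one B
      · have hne : u (Δ.v j) ≠ 0 := by omega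
        have hjk : j ≠ k := by
          intro h
          subst h
          rw [hu1] at h0
          omega
        exact suppIn_pow (suppIn_one_sub_X (hB j hjk hne)) _

end AuxFan

section AuxQuot

variable {n d : ℕ} {S : Type*} [Ring S]
variable (Δ : Fan n d) (uu : Fin n → ((Fin n → ℤ) →ₗ[ℤ] ℤ)) (ru : Fin n → Sˣ)
  (hc : ∀ i k, Commute (ru i) (ru k))

lemma mk_mon_zero {F : Finset (Fin d)} (hF : ¬ Δ.isCone F) :
    mkRcal S Δ uu ru hc (mon S F) = 0 := by
  have h := RingQuot.mkRingHom_rel (r := relOf S (gensII S Δ uu ru hc))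
    (⟨Or.inl ⟨F, hF, rfl⟩, rfl⟩ : relOf S (gensII S Δ uu ru hc) (mon S F) 0)
  have h2 : mkRcal S Δ uu ru hc (mon S F) = mkRcal S Δ uu ru hc 0 := h
  rwa [map_zero] at h2

lemma mk_z (a : Fin n → ℤ) :
    mkRcal S Δ uu ru hc (zPos S Δ (∑ i, a i • uu i)) =
      mkRcal S Δ uu ru hc (Cc S (rOf S ru hc a)) *
        mkRcal S Δ uu ru hc (zNeg S Δ (∑ i, a i • uu i)) := by
  have h := RingQuot.mkRingHom_rel (r := relOf S (gensII S Δ uu ru hc))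
    (⟨Or.inr ⟨a, rfl⟩, rfl⟩ : relOf S (gensII S Δ uu ru hc)
      (zPos S Δ (∑ i, a i • uu i) - Cc S (rOf S ru hc a) * zNeg S Δ (∑ i, a i • uu i)) 0)
  have h2 : mkRcal S Δ uu ru hc
      (zPos S Δ (∑ i, a i • uu i) - Cc S (rOf S ru hc a) * zNeg S Δ (∑ i, a i • uu i)) =
      mkRcal S Δ uu ru hc 0 := h
  rw [map_zero, map_sub, sub_eq_zero, map_mul] at h2
  exact h2

/-- membership in the `S`-span of the classes `x(G)`, `α ⊊ G`, `G ⊄ β` -/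
def InT (α β : Finset (Fin d)) (z : RcalRing S Δ uu ru hc) : Prop :=
  ∃ (s : ℕ) (G : Fin s → Finset (Fin d)) (c : Fin s → S),
    (∀ k, Δ.isCone (G k) ∧ α ⊂ G k ∧ ¬ G k ⊆ β) ∧
    z = ∑ k, mkRcal S Δ uu ru hc (Cc S (c k)) * mkRcal S Δ uu ru hc (mon S (G k))

variable {Δ uu ru hc}
variable {α β : Finset (Fin d)}

lemma InT_zero : InT Δ uu ru hc α β 0 :=
  ⟨0, fun k => k.elim0, fun k => k.elim0, fun k => k.elim0, by simp⟩

lemma InT_add {z w : RcalRing S Δ uu ru hc} (hz : InT Δ uu ru hc α β z)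
    (hw : InT Δ uu ru hc α β w) : InT Δ uu ru hc α β (z + w) := by
  obtain ⟨s1, G1, c1, h1, rfl⟩ := hz
  obtain ⟨s2, G2, c2, h2, rfl⟩ := hw
  refine ⟨s1 + s2, Fin.append G1 G2, Fin.append c1 c2, fun k => ?_, ?_⟩
  · refine Fin.addCases (fun i => ?_) (fun i => ?_) k
    · simpa [Fin.append_left] using h1 i
    · simpa [Fin.append_right] using h2 i
  · rw [Fin.sum_univ_add]
    simp [Fin.append_left, Fin.append_right]

lemma InT_cmul (r : S) {z : RcalRing S Δ uu ru hc} (hz : InT Δ uu ru hc α β z) :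
    InT Δ uu ru hc α β (mkRcal S Δ uu ru hc (Cc S r) * z) := by
  obtain ⟨s, G, c, h, rfl⟩ := hz
  refine ⟨s, G, fun k => r * c k, h, ?_⟩
  rw [Finset.mul_sum]
  refine Finset.sum_congr rfl fun k _ => ?_
  rw [← mul_assoc, ← map_mul, Cc_mul]

lemma InT_neg {z : RcalRing S Δ uu ru hc} (hz : InT Δ uu ru hc α β z) :
    InT Δ uu ru hc α β (-z) := by
  obtain ⟨s, G, c, h, rfl⟩ := hz
  refine ⟨s, G, fun k => -(c k), h, ?_⟩
  rw [← Finset.sum_neg_distrib]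
  refine Finset.sum_congr rfl fun k _ => ?_
  show -(mkRcal S Δ uu ru hc (Cc S (c k)) * mkRcal S Δ uu ru hc (mon S (G k))) =
    mkRcal S Δ uu ru hc (Cc S (-(c k))) * mkRcal S Δ uu ru hc (mon S (G k))
  rw [show Cc S (-(c k)) = -(Cc S (c k)) from AddMonoidAlgebra.single_neg _ _, map_neg]
  exact (neg_mul (α := RcalRing S Δ uu ru hc) _ _).symm

lemma InT_sub {z w : RcalRing S Δ uu ru hc} (hz : InT Δ uu ru hc α β z)
    (hw : InT Δ uu ru hc α β w) : InT Δ uu ru hc α β (z - w) := by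
  rw [sub_eq_add_neg]
  exact InT_add hz (InT_neg hw)

lemma InT_sum {ι : Type*} (s : Finset ι) (f : ι → RcalRing S Δ uu ru hc)
    (h : ∀ i ∈ s, InT Δ uu ru hc α β (f i)) : InT Δ uu ru hc α β (∑ i ∈ s, f i) := by
  classical
  induction s using Finset.induction_on with
  | empty => simpa using (InT_zero : InT Δ uu ru hc α β 0)
  | insert _ _ hx ih =>
    rw [Finset.sum_insert hx]
    exact InT_add (h _ (Finset.mem_insert_self _ _))
      (ih fun i hi => h i (Finset.mem_insert_of_mem hi))

lemma InT_single {G : Finset (Fin d)} (hG : Δ.isCone G) (hab : α ⊂ G) (hb : ¬ G ⊆ β)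
    (c : S) : InT Δ uu ru hc α β (mkRcal S Δ uu ru hc (Cc S c) * mkRcal S Δ uu ru hc (mon S G)) :=
  ⟨1, fun _ => G, fun _ => c, fun _ => ⟨hG, hab, hb⟩, by rw [Fin.sum_univ_one]⟩

lemma InT_mul_single (D : Poly S d) (κ : Fin d →₀ ℕ)
    (hrec : ∀ μ ∈ D.coeff.support, InT Δ uu ru hc α β
      (mkRcal S Δ uu ru hc (AddMonoidAlgebra.single (μ + κ) 1))) :
    InT Δ uu ru hc α β (mkRcal S Δ uu ru hc (D * AddMonoidAlgebra.single κ 1)) := by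
  classical
  have hD : D * AddMonoidAlgebra.single κ (1 : S) =
      ∑ μ ∈ D.coeff.support, AddMonoidAlgebra.single (μ + κ) (D.coeff μ) := by
    conv_lhs => rw [← AddMonoidAlgebra.sum_coeff_single D]
    rw [Finsupp.sum, Finset.sum_mul]
    exact Finset.sum_congr rfl fun μ _ => by
      rw [AddMonoidAlgebra.single_mul_single, mul_one]
  rw [hD, map_sum]
  apply InT_sum
  intro μ hμ
  have h1 : (AddMonoidAlgebra.single (μ + κ) (D.coeff μ) : Poly S d) =
      Cc S (D.coeff μ) * AddMonoidAlgebra.single (μ + κ) 1 := by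
    rw [Cc_mul_single, mul_one]
  rw [h1, map_mul]
  exact InT_cmul _ (hrec μ hμ)

end AuxQuot

section MainLemmas

variable {n d : ℕ} {S : Type*} [Ring S]
variable {Δ : Fan n d} {uu : Fin n → ((Fin n → ℤ) →ₗ[ℤ] ℤ)} {ru : Fin n → Sˣ}
  {hc : ∀ i k, Commute (ru i) (ru k)}
variable {α β : Finset (Fin d)}

/-- the main reduction lemma: monomials whose support strictly contains `α` and is
not contained in `β` lie in the span of the `x(G)`, `α ⊊ G`, `G ⊄ β`. -/
lemma lemB (hαβ : α ⊆ β)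
    (hrel : ∀ u : (Fin n → ℤ) →ₗ[ℤ] ℤ, ∃ r : S,
      mkRcal S Δ uu ru hc (zPos S Δ u) =
        mkRcal S Δ uu ru hc (Cc S r) * mkRcal S Δ uu ru hc (zNeg S Δ u)) :
    ∀ c e (ν : Fin d →₀ ℕ), d - ν.support.card = c →
      ν.sum (fun _ x => x) - ν.support.card = e →
      α ⊆ ν.support → ¬ ν.support ⊆ β →
      InT Δ uu ru hc α β (mkRcal S Δ uu ru hc (AddMonoidAlgebra.single ν 1)) := by
  classical
  intro c
  induction c using Nat.strong_induction_on with
  | _ c ihc =>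
  intro e
  induction e using Nat.strong_induction_on with
  | _ e ihe =>
  intro ν hcm hem hαν hβν
  by_cases hcone : Δ.isCone ν.support
  swap
  · -- non-cone supports die in the quotient
    have hle : (∑ j ∈ ν.support, Finsupp.single j (1 : ℕ)) ≤ ν := by
      rw [Finsupp.le_def]
      intro i
      rw [indicator_apply]
      by_cases hi : i ∈ ν.support
      · have := Finsupp.mem_support_iff.mp hi
        simp only [hi, if_true]
        omega
      · simp [hi]
    have hsplit : (AddMonoidAlgebra.single ν (1 : S) : Poly S d) =
        mon S ν.support *
          AddMonoidAlgebra.single (ν - ∑ j ∈ ν.support, Finsupp.single j 1) 1 := by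
      unfold mon
      rw [AddMonoidAlgebra.single_mul_single, one_mul, add_tsub_cancel_of_le hle]
    rw [hsplit, map_mul, mk_mon_zero Δ uu ru hc hcone, zero_mul]
    exact InT_zero
  by_cases hsq : ∀ j, ν j ≤ 1
  · -- squarefree: this is a generator of the span
    have hν : (AddMonoidAlgebra.single ν (1 : S) : Poly S d) = mon S ν.support := by
      unfold mon
      rw [← squarefree_eq ν hsq]
    have hαG : α ⊂ ν.support :=
      Finset.ssubset_iff_subset_ne.mpr ⟨hαν, fun h => hβν (h ▸ hαβ)⟩
    have h1 := InT_single (Δ := Δ) (uu := uu) (ru := ru) (hc := hc) (α := α) (β := β)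
      hcone hαG hβν 1
    rw [Cc_one, map_one, one_mul] at h1
    rw [hν]
    exact h1
  · push_neg at hsq
    obtain ⟨k, hk2⟩ := hsq
    have hkG : k ∈ ν.support := Finsupp.mem_support_iff.mpr (by omega)
    obtain ⟨u, hu1, hu0⟩ := exists_dual Δ hcone hkG
    obtain ⟨r, hr⟩ := hrel u
    obtain ⟨P, hsplit, hD, hE⟩ := zfacts (S := S) Δ u {j | j ∉ ν.support} k hu1
      (fun j hjk hne => by
        intro hjG
        exact hne (hu0 j hjG hjk))
    set κ := ν - Finsupp.single k 1 with hκdef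
    have hle : Finsupp.single k 1 ≤ ν := by
      rw [Finsupp.le_def]
      intro i
      by_cases h : i = k
      · subst h; rw [Finsupp.single_eq_same]; omega
      · rw [Finsupp.single_eq_of_ne h]; omega
    have hadd : Finsupp.single k 1 + κ = ν := add_tsub_cancel_of_le hle
    have hκsupp : κ.support = ν.support := by
      ext j
      rw [Finsupp.mem_support_iff, Finsupp.mem_support_iff, hκdef, Finsupp.tsub_apply]
      by_cases hjk : j = k
      · subst hjk; rw [Finsupp.single_eq_same]; omega
      · rw [Finsupp.single_eq_of_ne hjk]; omega
    have hsum : ν.sum (fun _ x => x) = 1 + κ.sum (fun _ x => x) := by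
      conv_lhs => rw [← hadd]
      rw [Finsupp.sum_add_index' (fun _ => rfl) (fun _ _ _ => rfl),
        Finsupp.sum_single_index rfl]
    have hcard_lt : ν.support.card < ν.sum (fun _ x => x) := by
      have h1 : ν.support.card = ∑ j ∈ ν.support, 1 := by
        rw [Finset.card_eq_sum_ones]
      have h2 : ν.sum (fun _ x => x) = ∑ j ∈ ν.support, ν j := rfl
      rw [h1, h2]
      refine Finset.sum_lt_sum (fun i hi => ?_) ⟨k, hkG, hk2⟩
      have := Finsupp.mem_support_iff.mp hi
      omega
    -- the identity in the quotient ring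
    have hrel' : (1 - mkRcal S Δ uu ru hc (X S k)) * mkRcal S Δ uu ru hc P =
        mkRcal S Δ uu ru hc (Cc S r) * mkRcal S Δ uu ru hc (zNeg S Δ u) := by
      have h := hr
      rw [hsplit, map_mul, map_sub, map_one] at h
      exact h
    have hp1 : mkRcal S Δ uu ru hc P = 1 + mkRcal S Δ uu ru hc (P - 1) := by
      rw [map_sub, map_one]; abel
    have hq1 : mkRcal S Δ uu ru hc (zNeg S Δ u) =
        1 + mkRcal S Δ uu ru hc (zNeg S Δ u - 1) := by
      rw [map_sub, map_one]; abel
    have key := key_identity (mkRcal S Δ uu ru hc (X S k))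
      (mkRcal S Δ uu ru hc (AddMonoidAlgebra.single κ 1))
      (mkRcal S Δ uu ru hc P) (mkRcal S Δ uu ru hc (zNeg S Δ u))
      (mkRcal S Δ uu ru hc (Cc S r)) (mkRcal S Δ uu ru hc (P - 1))
      (mkRcal S Δ uu ru hc (zNeg S Δ u - 1)) hrel' hp1 hq1
    -- the goal as a product
    have hxy : (AddMonoidAlgebra.single ν (1 : S) : Poly S d) =
        X S k * AddMonoidAlgebra.single κ 1 := by
      rw [X_mul_single, hadd]
    rw [hxy, map_mul, key]
    -- a common recursion principle for the `D`-type terms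
    have hDrec : ∀ (κ' : Fin d →₀ ℕ), κ'.support = ν.support →
        ∀ (D' : Poly S d), (∀ μ ∈ D'.coeff.support, μ ≠ 0 ∧ ∀ j ∈ μ.support, j ∉ ν.support) →
        InT Δ uu ru hc α β (mkRcal S Δ uu ru hc (D' * AddMonoidAlgebra.single κ' 1)) := by
      intro κ' hκ' D' hD'
      apply InT_mul_single
      intro μ hμ
      obtain ⟨hμ0, hμB⟩ := hD' μ hμ
      have hsupp : (μ + κ').support = μ.support ∪ ν.support := by
        rw [support_add_union, hκ']
      obtain ⟨j0, hj0⟩ := Finsupp.support_nonempty_iff.mpr hμ0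
      have hj0G : j0 ∉ ν.support := hμB j0 hj0
      have hssub : ν.support ⊂ (μ + κ').support := by
        rw [hsupp]
        refine Finset.ssubset_iff_subset_ne.mpr ⟨Finset.subset_union_right, fun h => ?_⟩
        have hmem : j0 ∈ μ.support ∪ ν.support := Finset.mem_union_left _ hj0
        rw [← h] at hmem
        exact hj0G hmem
      have hcardlt := Finset.card_lt_card hssub
      have hcardle : (μ + κ').support.card ≤ d := by
        have := Finset.card_le_univ (μ + κ').support
        simpa using this
      refine ihc (d - (μ + κ').support.card) (by omega) _ (μ + κ') rfl rfl ?_ ?_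
      · rw [hsupp]
        exact hαν.trans Finset.subset_union_right
      · intro hcon
        obtain ⟨j1, hj1, hj1β⟩ := Finset.not_subset.mp hβν
        exact hj1β (hcon (by rw [hsupp]; exact Finset.mem_union_right _ hj1))
    -- InT for each of the pieces
    have hκcard : κ.support.card = ν.support.card := by rw [hκsupp]
    have hκIn : InT Δ uu ru hc α β
        (mkRcal S Δ uu ru hc (AddMonoidAlgebra.single κ 1)) := by
      refine ihe (κ.sum (fun _ x => x) - κ.support.card) (by omega) κ ?_ rfl ?_ ?_
      · rw [hκsupp]; exact hcm
      · rw [hκsupp]; exact hαν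
      · rw [hκsupp]; exact hβν
    have ht2 : InT Δ uu ru hc α β
        (mkRcal S Δ uu ru hc (P - 1) * mkRcal S Δ uu ru hc (AddMonoidAlgebra.single κ 1)) := by
      rw [← map_mul]
      exact hDrec κ hκsupp (P - 1) hD
    have ht4 : InT Δ uu ru hc α β
        (mkRcal S Δ uu ru hc (zNeg S Δ u - 1) *
          mkRcal S Δ uu ru hc (AddMonoidAlgebra.single κ 1)) := by
      rw [← map_mul]
      exact hDrec κ hκsupp (zNeg S Δ u - 1) hE
    have ht5 : InT Δ uu ru hc α β
        (mkRcal S Δ uu ru hc (X S k) *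
          (mkRcal S Δ uu ru hc (P - 1) *
            mkRcal S Δ uu ru hc (AddMonoidAlgebra.single κ 1))) := by
      have hcomm : X S k * ((P - 1) * AddMonoidAlgebra.single κ (1 : S)) =
          (P - 1) * AddMonoidAlgebra.single ν 1 := by
        rw [← mul_assoc]
        have : X S k * (P - 1) = (P - 1) * X S k := single_one_comm _ _
        rw [this, mul_assoc, hxy.symm]
      rw [← map_mul, ← map_mul, hcomm]
      exact hDrec ν rfl (P - 1) hD
    -- combine
    have h1R : (1 : RcalRing S Δ uu ru hc) - mkRcal S Δ uu ru hc (Cc S r) =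
        mkRcal S Δ uu ru hc (Cc S (1 - r)) := by
      rw [Cc_sub, map_sub, Cc_one, map_one]
    rw [h1R]
    exact InT_add (InT_cmul _ hκIn) (InT_sub (InT_sub ht2 (InT_cmul _ ht4)) ht5)

/-- the top-level reduction: `x(γ')` for `α ⊆ γ' ⊆ β` -/
lemma lemTop (hαβ : α ⊆ β) (hβ : Δ.isCone β)
    (hrel : ∀ u : (Fin n → ℤ) →ₗ[ℤ] ℤ, ∃ r : S,
      mkRcal S Δ uu ru hc (zPos S Δ u) =
        mkRcal S Δ uu ru hc (Cc S r) * mkRcal S Δ uu ru hc (zNeg S Δ u)) :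
    ∀ t (γ' : Finset (Fin d)), γ'.card ≤ t → Δ.isCone γ' → α ⊆ γ' → γ' ⊆ β →
      ∃ (T : RcalRing S Δ uu ru hc) (c0 : S), InT Δ uu ru hc α β T ∧
        mkRcal S Δ uu ru hc (mon S γ') =
          T + mkRcal S Δ uu ru hc (Cc S c0) * mkRcal S Δ uu ru hc (mon S α) := by
  classical
  intro t
  induction t with
  | zero =>
    intro γ' hcard _ hαγ' _
    have hγ0 : γ' = ∅ := Finset.card_eq_zero.mp (Nat.le_zero.mp hcard)
    have hαγ : α = γ' := by
      rw [hγ0] at hαγ' ⊢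
      exact Finset.subset_empty.mp hαγ'
    refine ⟨0, 1, InT_zero, ?_⟩
    rw [← hαγ, Cc_one, map_one, one_mul, zero_add]
  | succ t ih =>
    intro γ' hcard hconeγ hαγ' hγ'β
    by_cases heq : α = γ'
    · refine ⟨0, 1, InT_zero, ?_⟩
      rw [← heq, Cc_one, map_one, one_mul, zero_add]
    · obtain ⟨e, heγ, heα⟩ := Finset.exists_of_ssubset
        (Finset.ssubset_iff_subset_ne.mpr ⟨hαγ', heq⟩)
      obtain ⟨u, hu1, hu0⟩ := exists_dual Δ hβ (hγ'β heγ)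
      obtain ⟨r, hr⟩ := hrel u
      obtain ⟨P, hsplit, hD, hE⟩ := zfacts (S := S) Δ u {j | j ∉ β} e hu1
        (fun j hje hne => by
          intro hjβ
          exact hne (hu0 j hjβ hje))
      set κ : Fin d →₀ ℕ := ∑ j ∈ γ'.erase e, Finsupp.single j 1 with hκdef
      have hκsupp : κ.support = γ'.erase e := indicator_support _
      have hmonκ : (AddMonoidAlgebra.single κ (1 : S) : Poly S d) = mon S (γ'.erase e) := rfl
      have hadd : Finsupp.single e 1 + κ = ∑ j ∈ γ', Finsupp.single j 1 := by
        rw [hκdef]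
        exact Finset.add_sum_erase γ' (fun j => Finsupp.single j 1) heγ
      have hxy : (mon S γ' : Poly S d) = X S e * AddMonoidAlgebra.single κ 1 := by
        rw [X_mul_single, hadd]
        rfl
      have hrel' : (1 - mkRcal S Δ uu ru hc (X S e)) * mkRcal S Δ uu ru hc P =
          mkRcal S Δ uu ru hc (Cc S r) * mkRcal S Δ uu ru hc (zNeg S Δ u) := by
        have h := hr
        rw [hsplit, map_mul, map_sub, map_one] at h
        exact h
      have hp1 : mkRcal S Δ uu ru hc P = 1 + mkRcal S Δ uu ru hc (P - 1) := by
        rw [map_sub, map_one]; abel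
      have hq1 : mkRcal S Δ uu ru hc (zNeg S Δ u) =
          1 + mkRcal S Δ uu ru hc (zNeg S Δ u - 1) := by
        rw [map_sub, map_one]; abel
      have key := key_identity (mkRcal S Δ uu ru hc (X S e))
        (mkRcal S Δ uu ru hc (AddMonoidAlgebra.single κ 1))
        (mkRcal S Δ uu ru hc P) (mkRcal S Δ uu ru hc (zNeg S Δ u))
        (mkRcal S Δ uu ru hc (Cc S r)) (mkRcal S Δ uu ru hc (P - 1))
        (mkRcal S Δ uu ru hc (zNeg S Δ u - 1)) hrel' hp1 hq1
      -- recursion for `D`-type terms via `lemB`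
      have hDrec : ∀ (κ' : Fin d →₀ ℕ), α ⊆ κ'.support →
          ∀ (D' : Poly S d), (∀ μ ∈ D'.coeff.support, μ ≠ 0 ∧ ∀ j ∈ μ.support, j ∉ β) →
          InT Δ uu ru hc α β (mkRcal S Δ uu ru hc (D' * AddMonoidAlgebra.single κ' 1)) := by
        intro κ' hκ' D' hD'
        apply InT_mul_single
        intro μ hμ
        obtain ⟨hμ0, hμB⟩ := hD' μ hμ
        obtain ⟨j0, hj0⟩ := Finsupp.support_nonempty_iff.mpr hμ0
        refine lemB hαβ hrel _ _ (μ + κ') rfl rfl ?_ ?_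
        · rw [support_add_union]
          exact hκ'.trans Finset.subset_union_right
        · intro hcon
          exact hμB j0 hj0 (hcon (by rw [support_add_union]; exact Finset.mem_union_left _ hj0))
      have hακ : α ⊆ γ'.erase e := fun a ha =>
        Finset.mem_erase.mpr ⟨fun h => heα (h ▸ ha), hαγ' ha⟩
      have ht2 : InT Δ uu ru hc α β
          (mkRcal S Δ uu ru hc (P - 1) *
            mkRcal S Δ uu ru hc (AddMonoidAlgebra.single κ 1)) := by
        rw [← map_mul]
        exact hDrec κ (by rw [hκsupp]; exact hακ) (P - 1) hD
      have ht4 : InT Δ uu ru hc α β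
          (mkRcal S Δ uu ru hc (zNeg S Δ u - 1) *
            mkRcal S Δ uu ru hc (AddMonoidAlgebra.single κ 1)) := by
        rw [← map_mul]
        exact hDrec κ (by rw [hκsupp]; exact hακ) (zNeg S Δ u - 1) hE
      have ht5 : InT Δ uu ru hc α β
          (mkRcal S Δ uu ru hc (X S e) *
            (mkRcal S Δ uu ru hc (P - 1) *
              mkRcal S Δ uu ru hc (AddMonoidAlgebra.single κ 1))) := by
        have hcomm : X S e * ((P - 1) * AddMonoidAlgebra.single κ (1 : S)) =
            (P - 1) * AddMonoidAlgebra.single (Finsupp.single e 1 + κ) 1 := by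
          rw [← mul_assoc]
          have h1 : X S e * (P - 1) = (P - 1) * X S e := single_one_comm _ _
          rw [h1, mul_assoc, X_mul_single]
        rw [← map_mul, ← map_mul, hcomm]
        refine hDrec _ ?_ (P - 1) hD
        rw [hadd, indicator_support]
        exact hαγ'
      -- combine with the induction hypothesis for the smaller cone
      obtain ⟨T0, c0, hT0, hmon0⟩ := ih (γ'.erase e)
        (by have := Finset.card_erase_of_mem heγ; omega)
        (Δ.isCone_mono hconeγ (Finset.erase_subset _ _)) hακ
        ((Finset.erase_subset _ _).trans hγ'β)
      have h1R : (1 : RcalRing S Δ uu ru hc) - mkRcal S Δ uu ru hc (Cc S r) =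
          mkRcal S Δ uu ru hc (Cc S (1 - r)) := by
        rw [Cc_sub, map_sub, Cc_one, map_one]
      refine ⟨mkRcal S Δ uu ru hc (Cc S (1 - r)) * T0 +
          (mkRcal S Δ uu ru hc (P - 1) *
              mkRcal S Δ uu ru hc (AddMonoidAlgebra.single κ 1) -
            mkRcal S Δ uu ru hc (Cc S r) *
              (mkRcal S Δ uu ru hc (zNeg S Δ u - 1) *
                mkRcal S Δ uu ru hc (AddMonoidAlgebra.single κ 1)) -
            mkRcal S Δ uu ru hc (X S e) *
              (mkRcal S Δ uu ru hc (P - 1) *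
                mkRcal S Δ uu ru hc (AddMonoidAlgebra.single κ 1))),
        (1 - r) * c0, ?_, ?_⟩
      · exact InT_add (InT_cmul _ hT0) (InT_sub (InT_sub ht2 (InT_cmul _ ht4)) ht5)
      · have hy : mkRcal S Δ uu ru hc (AddMonoidAlgebra.single κ (1 : S)) =
            T0 + mkRcal S Δ uu ru hc (Cc S c0) * mkRcal S Δ uu ru hc (mon S α) := by
          rw [hmonκ]; exact hmon0
        have hCc : mkRcal S Δ uu ru hc (Cc S (1 - r)) * mkRcal S Δ uu ru hc (Cc S c0) =
            mkRcal S Δ uu ru hc (Cc S ((1 - r) * c0)) := by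
          rw [← map_mul, Cc_mul]
        rw [hxy, map_mul, key, h1R, hy, mul_add, ← mul_assoc, hCc]
        abel

end MainLemmas

theorem statement6 {n d m : ℕ} (hn : 1 ≤ n) (hnd : n ≤ d) (hm : 1 ≤ m)
    (Δ : Fan n d) (o : MaxOrder Δ m) (hstar : o.Star)
    (hlast : o.σ ⟨m - 1, by omega⟩ = firstn hnd)
    (S : Type*) [Ring S] (ru : Fin n → Sˣ)
    (hcen : ∀ i, (ru i : S) ∈ Subring.center S)
    (uu : Fin n → ((Fin n → ℤ) →ₗ[ℤ] ℤ))
    (huu : ∀ i j : Fin n, uu i (Δ.v (Fin.castLE hnd j)) = if i = j then 1 else 0)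
    (α γ β : Finset (Fin d))
    (hα : Δ.isCone α) (hγ : Δ.isCone γ) (hβ : Δ.isCone β)
    (hαγ : α ⊂ γ) (hγβ : γ ⊆ β) :
    ∃ (s : ℕ) (G : Fin s → Finset (Fin d)) (c : Fin s → S) (c0 : S),
      (∀ k, Δ.isCone (G k) ∧ α ⊂ G k ∧ ¬ G k ⊆ β) ∧
      mkRcal S Δ uu ru (central_commute S ru hcen) (mon S γ) =
        (∑ k, mkRcal S Δ uu ru (central_commute S ru hcen) (Cc S (c k)) *
            mkRcal S Δ uu ru (central_commute S ru hcen) (mon S (G k)))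
        + mkRcal S Δ uu ru (central_commute S ru hcen) (Cc S c0) *
            mkRcal S Δ uu ru (central_commute S ru hcen) (mon S α) := by
  classical
  -- the first `n` edge vectors form a `ℤ`-basis
  have hfc : Δ.isCone (firstn hnd) := by
    have h := o.isCone_σ ⟨m - 1, by omega⟩
    rwa [hlast] at h
  obtain ⟨b, ι, hinj, hb⟩ := Δ.unimodular hfc
  have hmem : ∀ j : Fin n, Fin.castLE hnd j ∈ firstn hnd := fun j =>
    Finset.mem_map.mpr ⟨j, Finset.mem_univ j, rfl⟩
  have hebij : Function.Bijective (fun j : Fin n => ι (Fin.castLE hnd j)) := by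
    refine Finite.injective_iff_bijective.mp ?_
    intro a b' hab
    exact Fin.castLE_injective hnd (hinj (hmem a) (hmem b') hab)
  have hB : ∀ j, (b.reindex (Equiv.ofBijective _ hebij).symm) j =
      Δ.v (Fin.castLE hnd j) := by
    intro j
    rw [Module.Basis.reindex_apply, Equiv.symm_symm]
    exact hb _ (hmem j)
  -- every functional gives a relation in the quotient ring
  have hrel : ∀ u : (Fin n → ℤ) →ₗ[ℤ] ℤ, ∃ r : S,
      mkRcal S Δ uu ru (central_commute S ru hcen) (zPos S Δ u) =
        mkRcal S Δ uu ru (central_commute S ru hcen) (Cc S r) *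
          mkRcal S Δ uu ru (central_commute S ru hcen) (zNeg S Δ u) := by
    intro u
    have hu : (∑ i, u (Δ.v (Fin.castLE hnd i)) • uu i) = u := by
      apply (b.reindex (Equiv.ofBijective _ hebij).symm).ext
      intro j
      rw [hB j, LinearMap.sum_apply]
      have hterm : ∀ i : Fin n,
          ((u (Δ.v (Fin.castLE hnd i)) • uu i) (Δ.v (Fin.castLE hnd j))) =
          if i = j then u (Δ.v (Fin.castLE hnd j)) else 0 := by
        intro i
        rw [LinearMap.smul_apply, huu i j]
        by_cases h : i = j
        · subst h; simp
        · simp [h]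
      rw [Finset.sum_congr rfl (fun i _ => hterm i),
        Finset.sum_ite_eq' Finset.univ j (fun _ => u (Δ.v (Fin.castLE hnd j)))]
      simp
    refine ⟨rOf S ru (central_commute S ru hcen)
      (fun i => u (Δ.v (Fin.castLE hnd i))), ?_⟩
    have h := mk_z Δ uu ru (central_commute S ru hcen)
      (fun i => u (Δ.v (Fin.castLE hnd i)))
    rw [hu] at h
    exact h
  have hαβ : α ⊆ β := (subset_of_ssubset hαγ).trans hγβ
  obtain ⟨T, c0, hT, heq⟩ := lemTop hαβ hβ hrel γ.card γ le_rfl hγ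
    (subset_of_ssubset hαγ) hγβ
  obtain ⟨s, G, c, hprops, rfl⟩ := hT
  exact ⟨s, G, c, c0, hprops, heq⟩

end SU
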